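/- arXiv:1506.09150 — 2 statements merged into one kernel-verified Lean document; each statement's English description precedes it below -/
import Mathlib

section
/- Let H be a separable real Hilbert space, C₀ a positive self-adjoint injective trace-class operator on H with Cameron–Martin space H¹ = Im(C₀^{1/2}), and ξ ∼ N(0, C₀). Suppose Φ_μ : H → ℝ is Fréchet differentiable at every point of the form x + m₀ + ξ and that the family of derivatives is uniformly integrable enough to differentiate under the expectation (e.g. E[‖Φ'_μ(x + m₀ + ξ)‖] is locally bounded and dominated). Then J(x) = E[Φ_μ(x + m₀ + ξ)] + (1/2)‖x‖²_{C₀} + log Z_μ is Fréchet differentiable on H¹, with first variation J'(x) = E[Φ'_μ(x + m₀ + ξ)] + C₀^{−1}x, and, if Φ_μ is twice Fréchet differentiable with analogous domination, second variation J''(x) = E[Φ''_μ(x + m₀ + ξ)] + C₀^{−1}. -/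
open MeasureTheory Real
open scoped RealInnerProductSpace

/-!
Both variations come from differentiating under the expectation. The domination hypotheses give
an integrable Lipschitz bound for `x ↦ Φμ (ι x + m₀ + ξ)` (resp. for `x ↦ Φ' (ι x + m₀ + ξ)`) on
a ball, so the derivative of the integral is the integral of the derivative; the chain rule
through the affine map `x ↦ ι x + m₀ + ξ` turns `Φ'` into `Φ' ∘ ι` and `Φ''` into `Φ'' (ι ·) (ι ·)`.
The Cameron–Martin term `½ ‖x‖²` has derivative `⟪x, ·⟫`, whose derivative is the inner product.
-/

section LocallyDominated

variable {α E G G' : Type*} [MeasurableSpace α] {μ : Measure α} [NormedAddCommGroup E]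

def LocallyDominated [Norm G] (μ : Measure α) (f : E → α → G) (x : E) : Prop :=
  ∃ ε > 0, ∃ bound : α → ℝ, Integrable bound μ ∧
    ∀ᵐ c ∂μ, ∀ y : E, ‖y - x‖ < ε → ‖f y c‖ ≤ bound c

theorem LocallyDominated.mono_mul [Norm G] [Norm G'] {f : E → α → G} {g : E → α → G'} {x : E}
    (hf : LocallyDominated μ f x) {K : ℝ} (hK : 0 ≤ K) (hgf : ∀ y c, ‖g y c‖ ≤ ‖f y c‖ * K) :
    LocallyDominated μ g x := by
  obtain ⟨ε, hε, bound, hbound, hfb⟩ := hf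
  refine ⟨ε, hε, fun c => bound c * K, hbound.mul_const K, ?_⟩
  filter_upwards [hfb] with c hc y hy
  exact (hgf y c).trans (mul_le_mul_of_nonneg_right (hc y hy) hK)

theorem LocallyDominated.integrable [NormedAddCommGroup G] {f : E → α → G} {x : E}
    (hf : LocallyDominated μ f x) (hmeas : AEStronglyMeasurable (f x) μ) :
    Integrable (f x) μ := by
  obtain ⟨ε, hε, bound, hbound, hfb⟩ := hf
  exact hbound.mono' hmeas (hfb.mono fun c hc => hc x (by simpa using hε))

theorem LocallyDominated.hasFDerivAt_integral [NormedSpace ℝ E]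
    [NormedAddCommGroup G] [NormedSpace ℝ G] [CompleteSpace G]
    {F : E → α → G} {F' : E → α → E →L[ℝ] G} {x : E}
    (hF'_dom : LocallyDominated μ F' x) (hF_meas : ∀ y, AEStronglyMeasurable (F y) μ)
    (hF_int : Integrable (F x) μ) (hF'_meas : AEStronglyMeasurable (F' x) μ)
    (hF : ∀ c y, HasFDerivAt (F · c) (F' y c) y) :
    HasFDerivAt (fun y => ∫ c, F y c ∂μ) (∫ c, F' x c ∂μ) x := by
  obtain ⟨ε, hε, bound, hbound, hF'b⟩ := hF'_dom
  refine hasFDerivAt_integral_of_dominated_of_fderiv_le (Metric.ball_mem_nhds x hε)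
    (.of_forall hF_meas) hF_int hF'_meas ?_ hbound (.of_forall fun c y _ => hF c y)
  filter_upwards [hF'b] with c hc y hy
  exact hc y (mem_ball_iff_norm.1 hy)

end LocallyDominated

theorem ContinuousLinearMap.norm_bilinearComp_le {E F G H : Type*}
    [SeminormedAddCommGroup E] [NormedSpace ℝ E] [SeminormedAddCommGroup F] [NormedSpace ℝ F]
    [SeminormedAddCommGroup G] [NormedSpace ℝ G] [SeminormedAddCommGroup H] [NormedSpace ℝ H]
    (B : E →L[ℝ] F →L[ℝ] G) (f : H →L[ℝ] E) (g : H →L[ℝ] F) :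
    ‖B.bilinearComp f g‖ ≤ ‖B‖ * ‖f‖ * ‖g‖ :=
  opNorm_le_bound₂ _ (by positivity) fun u v =>
    calc ‖B (f u) (g v)‖ ≤ ‖B‖ * ‖f u‖ * ‖g v‖ := B.le_opNorm₂ _ _
      _ ≤ ‖B‖ * (‖f‖ * ‖u‖) * (‖g‖ * ‖v‖) := by gcongr <;> exact le_opNorm _ _
      _ = ‖B‖ * ‖f‖ * ‖g‖ * ‖u‖ * ‖v‖ := by ring

theorem HasFDerivAt.precomp_comp {E H G : Type*}
    [NormedAddCommGroup E] [NormedSpace ℝ E] [NormedAddCommGroup H] [NormedSpace ℝ H]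
    [NormedAddCommGroup G] [NormedSpace ℝ G]
    {D : H → H →L[ℝ] G} {D' : H →L[ℝ] H →L[ℝ] G} {T : E → H} {ι : E →L[ℝ] H} {y : E}
    (hD : HasFDerivAt D D' (T y)) (hT : HasFDerivAt T ι y) :
    HasFDerivAt (fun z => (D (T z)).comp ι) (D'.bilinearComp ι ι) y := by
  refine ((((ContinuousLinearMap.compL ℝ E H G).flip ι).hasFDerivAt).comp y
    (hD.comp y hT)).congr_fderiv ?_
  ext u v
  rfl

theorem hasFDerivAt_half_norm_sq {E : Type*} [NormedAddCommGroup E] [InnerProductSpace ℝ E]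
    (x : E) : HasFDerivAt (fun y : E => (1 / 2 : ℝ) * ‖y‖ ^ 2) (innerSL ℝ x) x := by
  refine ((hasStrictFDerivAt_norm_sq x).hasFDerivAt.const_mul (1 / 2 : ℝ)).congr_fderiv ?_
  ext v
  simp

theorem relative_entropy_first_and_second_variation_general
    {H : Type*} [NormedAddCommGroup H] [InnerProductSpace ℝ H]
    [MeasurableSpace H] [BorelSpace H]
    {E : Type*} [NormedAddCommGroup E] [InnerProductSpace ℝ E]
    -- the Cameron–Martin embedding ι : H¹ → H and the covariance C₀ = ι ∘ ι*
    (ι : E →L[ℝ] H)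
    (μG : Measure H)
    (m₀ : H) (Zμ : ℝ)
    -- Φμ is Fréchet differentiable at every point of the form x + m₀ + ξ
    (Φμ : H → ℝ) (Φ' : H → H →L[ℝ] ℝ)
    (hΦdiff : ∀ u : H, HasFDerivAt Φμ (Φ' u) u)
    (hΦint : ∀ x : E, Integrable (fun c => Φμ (ι x + m₀ + c)) μG)
    (hΦ'meas : ∀ x : E,
      AEStronglyMeasurable (fun c => (Φ' (ι x + m₀ + c)).comp ι) μG)
    -- domination: E[‖Φ' (x + m₀ + ξ)‖] is locally bounded and dominated
    (hdom : ∀ x : E, ∃ ε > 0, ∃ bound : H → ℝ, Integrable bound μG ∧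
      ∀ᵐ c ∂μG, ∀ y : E, ‖y - x‖ < ε → ‖Φ' (ι y + m₀ + c)‖ ≤ bound c)
    -- Φμ is twice Fréchet differentiable, with analogous domination
    (Φ'' : H → H →L[ℝ] H →L[ℝ] ℝ)
    (hΦ''diff : ∀ u : H, HasFDerivAt Φ' (Φ'' u) u)
    (hΦ''meas : ∀ x : E,
      AEStronglyMeasurable (fun c => (Φ'' (ι x + m₀ + c)).bilinearComp ι ι) μG)
    (hdom2 : ∀ x : E, ∃ ε > 0, ∃ bound : H → ℝ, Integrable bound μG ∧
      ∀ᵐ c ∂μG, ∀ y : E, ‖y - x‖ < ε → ‖Φ'' (ι y + m₀ + c)‖ ≤ bound c)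
    -- the inner product of H¹ = (E, ⟪·,·⟫) as a continuous bilinear map
    (innerB : E →L[ℝ] E →L[ℝ] ℝ) (hinnerB : ∀ u v : E, innerB u v = ⟪u, v⟫)
    -- the objective J on H¹
    (J : E → ℝ)
    (hJ : ∀ x : E,
      J x = (∫ c, Φμ (ι x + m₀ + c) ∂μG) + (1 / 2) * ‖x‖ ^ 2 + log Zμ) :
    -- first variation: J'(x) = E[Φ'(x + m₀ + ξ)] + C₀⁻¹ x in the dual pairing on H¹
    (∀ x : E, HasFDerivAt J
      ((∫ c, (Φ' (ι x + m₀ + c)).comp ι ∂μG) + innerB x) x) ∧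
    -- second variation: J''(x) = E[Φ''(x + m₀ + ξ)] + C₀⁻¹ as derivative of x ↦ J'(x)
    (∀ x : E, HasFDerivAt
      (fun y : E => (∫ c, (Φ' (ι y + m₀ + c)).comp ι ∂μG) + innerB y)
      ((∫ c, (Φ'' (ι x + m₀ + c)).bilinearComp ι ι ∂μG) + innerB) x) := by
  obtain rfl : innerB = innerSL ℝ := by
    ext u v
    exact hinnerB u v
  obtain rfl : J = _ := funext hJ
  have hΦcont : Continuous Φμ := continuous_iff_continuousAt.2 fun u => (hΦdiff u).continuousAt
  have hshift : ∀ c y, HasFDerivAt (fun y : E => ι y + m₀ + c) ι y := fun c y =>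
    (ι.hasFDerivAt.add_const m₀).add_const c
  have hdom' : ∀ x, LocallyDominated μG (fun y c => (Φ' (ι y + m₀ + c)).comp ι) x := fun x =>
    LocallyDominated.mono_mul (f := fun y c => Φ' (ι y + m₀ + c)) (hdom x) (norm_nonneg ι)
      fun _ _ => ContinuousLinearMap.opNorm_comp_le _ _
  have hdom2' : ∀ x, LocallyDominated μG
      (fun y c => (Φ'' (ι y + m₀ + c)).bilinearComp ι ι) x := fun x =>
    LocallyDominated.mono_mul (f := fun y c => Φ'' (ι y + m₀ + c)) (hdom2 x) (by positivity)
      fun _ _ => (ContinuousLinearMap.norm_bilinearComp_le _ _ _).trans_eq (mul_assoc _ _ _)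
  refine ⟨fun x => ?_, fun x => ?_⟩
  · have hI := (hdom' x).hasFDerivAt_integral (F := fun y c => Φμ (ι y + m₀ + c))
      (fun y => (hΦcont.comp (continuous_const.add continuous_id)).aestronglyMeasurable)
      (hΦint x) (hΦ'meas x) fun c y => (hΦdiff _).comp y (hshift c y)
    exact (hI.add (hasFDerivAt_half_norm_sq x)).add_const _
  · have hI := (hdom2' x).hasFDerivAt_integral hΦ'meas ((hdom' x).integrable (hΦ'meas x))
      (hΦ''meas x) fun c y => (hΦ''diff _).precomp_comp (hshift c y)
    exact hI.add (innerSL ℝ).hasFDerivAt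

/-- **First and second variations of the relative entropy objective.**
`H` is a separable real Hilbert space with Gaussian measure `N(0, C₀)` (the law `μG` of `ξ`),
and `E` is the Cameron–Martin space `H¹ = Im (C₀^{1/2})` with its Cameron–Martin inner
product, realized as a Hilbert space with injective embedding `ι : E →L H` such that
`C₀ = ι ∘ ι*` (the map `C₀E = ι*` satisfies `⟪C₀E u, e⟫_E = ⟪u, ι e⟫_H`).
Let `J (x) = E[Φμ (x + m₀ + ξ)] + ½ ‖x‖²_{C₀} + log Zμ` on `H¹`.  If `Φμ` is Fréchet
differentiable with derivative `Φ'` at every relevant point and the derivatives are dominated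
(uniformly integrable enough to differentiate under the expectation), then `J` is Fréchet
differentiable on `H¹` with `J' (x) = E[Φ' (x + m₀ + ξ)] + C₀^{-1} x`, the latter term
interpreted in the dual pairing on `H¹` (i.e. `h ↦ ⟪x, h⟫_{C₀}`); if moreover `Φμ` is twice
Fréchet differentiable with analogous domination, then
`J'' (x) = E[Φ'' (x + m₀ + ξ)] + C₀^{-1}` as the derivative of `x ↦ J' (x)`. -/
theorem relative_entropy_first_and_second_variation
    {H : Type*} [NormedAddCommGroup H] [InnerProductSpace ℝ H] [CompleteSpace H]
    [SecondCountableTopology H] [MeasurableSpace H] [BorelSpace H]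
    {E : Type*} [NormedAddCommGroup E] [InnerProductSpace ℝ E] [CompleteSpace E]
    -- the Cameron–Martin embedding ι : H¹ → H and the covariance C₀ = ι ∘ ι*
    (ι : E →L[ℝ] H) (hι : Function.Injective ι)
    (C₀ : H →L[ℝ] H) (hCsa : IsSelfAdjoint C₀) (hCpos : ∀ u : H, 0 ≤ ⟪C₀ u, u⟫)
    (hCinj : Function.Injective C₀)
    (C₀E : H →L[ℝ] E) (hfactor : ∀ u : H, ι (C₀E u) = C₀ u)
    (hadj : ∀ (u : H) (e : E), ⟪C₀E u, e⟫ = ⟪u, ι e⟫)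
    -- ξ ∼ N(0, C₀): the law μG has characteristic functional of a centered Gaussian
    (μG : Measure H) [IsProbabilityMeasure μG]
    (hGauss : ∀ t : H, ∫ u, Complex.exp (Complex.I * (⟪t, u⟫ : ℝ)) ∂μG =
      Complex.exp (-(1 / 2 : ℂ) * (⟪C₀ t, t⟫ : ℝ)))
    (m₀ : H) (Zμ : ℝ) (hZμ : 0 < Zμ)
    -- Φμ is Fréchet differentiable at every point of the form x + m₀ + ξ
    (Φμ : H → ℝ) (Φ' : H → H →L[ℝ] ℝ)
    (hΦdiff : ∀ u : H, HasFDerivAt Φμ (Φ' u) u)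
    (hΦint : ∀ x : E, Integrable (fun c => Φμ (ι x + m₀ + c)) μG)
    (hΦ'meas : ∀ x : E,
      AEStronglyMeasurable (fun c => (Φ' (ι x + m₀ + c)).comp ι) μG)
    -- domination: E[‖Φ' (x + m₀ + ξ)‖] is locally bounded and dominated
    (hdom : ∀ x : E, ∃ ε > 0, ∃ bound : H → ℝ, Integrable bound μG ∧
      ∀ᵐ c ∂μG, ∀ y : E, ‖y - x‖ < ε → ‖Φ' (ι y + m₀ + c)‖ ≤ bound c)
    -- Φμ is twice Fréchet differentiable, with analogous domination
    (Φ'' : H → H →L[ℝ] H →L[ℝ] ℝ)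
    (hΦ''diff : ∀ u : H, HasFDerivAt Φ' (Φ'' u) u)
    (hΦ''meas : ∀ x : E,
      AEStronglyMeasurable (fun c => (Φ'' (ι x + m₀ + c)).bilinearComp ι ι) μG)
    (hdom2 : ∀ x : E, ∃ ε > 0, ∃ bound : H → ℝ, Integrable bound μG ∧
      ∀ᵐ c ∂μG, ∀ y : E, ‖y - x‖ < ε → ‖Φ'' (ι y + m₀ + c)‖ ≤ bound c)
    -- the inner product of H¹ = (E, ⟪·,·⟫) as a continuous bilinear map
    (innerB : E →L[ℝ] E →L[ℝ] ℝ) (hinnerB : ∀ u v : E, innerB u v = ⟪u, v⟫)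
    -- the objective J on H¹
    (J : E → ℝ)
    (hJ : ∀ x : E,
      J x = (∫ c, Φμ (ι x + m₀ + c) ∂μG) + (1 / 2) * ‖x‖ ^ 2 + log Zμ) :
    -- first variation: J'(x) = E[Φ'(x + m₀ + ξ)] + C₀⁻¹ x in the dual pairing on H¹
    (∀ x : E, HasFDerivAt J
      ((∫ c, (Φ' (ι x + m₀ + c)).comp ι ∂μG) + innerB x) x) ∧
    -- second variation: J''(x) = E[Φ''(x + m₀ + ξ)] + C₀⁻¹ as derivative of x ↦ J'(x)
    (∀ x : E, HasFDerivAt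
      (fun y : E => (∫ c, (Φ' (ι y + m₀ + c)).comp ι ∂μG) + innerB y)
      ((∫ c, (Φ'' (ι x + m₀ + c)).bilinearComp ι ι ∂μG) + innerB) x) :=
  relative_entropy_first_and_second_variation_general ι μG m₀ Zμ Φμ Φ' hΦdiff hΦint hΦ'meas hdom Φ''
    hΦ''diff hΦ''meas hdom2 innerB hinnerB J hJ
end

section
/- Let H be a separable real Hilbert space and C₀ a positive self-adjoint injective trace-class operator with largest eigenvalue λ₁ > 0 and Cameron–Martin space H¹ = Im(C₀^{1/2}). Let Φ : H¹ → ℝ be such that G(x) := E[Φ''(x + m₀ + ξ)] exists for ξ ∼ N(0, C₀), let J''(x) = G(x) + C₀^{−1} (as quadratic forms on H¹), and let x_⋆ ∈ H¹ satisfy J'(x_⋆) = 0 where J'(x) = E[Φ'(x + m₀ + ξ)] + C₀^{−1}x, with J twice Fréchet differentiable on a convex open set U_⋆ ∋ x_⋆. If there is θ ∈ [0, 1) such that for all x ∈ U_⋆ and all nonzero u ∈ H, ⟨G(x)u, u⟩ ≥ −θ λ₁^{−1} ‖u‖², then for all x ∈ U_⋆, ⟨x − x_⋆, f(x)⟩_{C₀}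 ≥ (1 − θ)‖x − x_⋆‖²_{C₀}, where f(x) = C₀ E[Φ'(x + m₀ + ξ)] + x. -/
/-! The derivative of `f (x) = C₀ E[Φ'(x + m₀ + ξ)] + x` is coercive in the Cameron–Martin norm
with constant `1 - θ`: the spectral bound `‖ι e‖² ≤ λ₁ ‖e‖²` turns the lower bound
`-θ λ₁⁻¹ ‖ι e‖²` on `G` into `-θ ‖e‖²`. Integrating this along the segment from `x⋆` to `x`
(mean value theorem) and using `f x⋆ = 0` gives the monotonicity inequality. -/

open MeasureTheory Real
open scoped RealInnerProductSpace

section InnerProductSpace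

variable {E H : Type*} [NormedAddCommGroup E] [InnerProductSpace ℝ E]
  [NormedAddCommGroup H] [InnerProductSpace ℝ H]

/-- `‖T e‖² = ⟪S (T e), e⟫ ≤ ‖S (T e)‖ ‖e‖`; square this and cancel `‖T e‖²`. -/
theorem norm_sq_le_of_adjoint_norm_sq_le {T : E →L[ℝ] H} {S : H →L[ℝ] E}
    (hST : ∀ u e, ⟪S u, e⟫ = ⟪u, T e⟫) {c : ℝ} (hc : 0 ≤ c)
    (hS : ∀ u, ‖S u‖ ^ 2 ≤ c * ‖u‖ ^ 2) (e : E) :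
    ‖T e‖ ^ 2 ≤ c * ‖e‖ ^ 2 := by
  have hTe : ‖T e‖ ^ 2 ≤ ‖S (T e)‖ * ‖e‖ := by
    rw [← real_inner_self_eq_norm_sq, ← hST]
    exact real_inner_le_norm _ _
  rcases (norm_nonneg (T e)).eq_or_lt with hzero | hpos
  · rw [← hzero, zero_pow two_ne_zero]
    positivity
  · have hsq : (‖T e‖ ^ 2) ^ 2 ≤ c * ‖T e‖ ^ 2 * ‖e‖ ^ 2 := by
      nlinarith [hS (T e), norm_nonneg (S (T e)), norm_nonneg e, pow_pos hpos 2]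
    nlinarith [pow_pos hpos 2]

theorem norm_sq_le_of_factor_adjoint {ι : E →L[ℝ] H} {C₀ : H →L[ℝ] H} {C₀E : H →L[ℝ] E}
    (hfactor : ∀ u, ι (C₀E u) = C₀ u) (hadj : ∀ u e, ⟪C₀E u, e⟫ = ⟪u, ι e⟫)
    {lam : ℝ} (hlam : 0 ≤ lam) (hlargest : ∀ u, ⟪C₀ u, u⟫ ≤ lam * ‖u‖ ^ 2) (e : E) :
    ‖ι e‖ ^ 2 ≤ lam * ‖e‖ ^ 2 := by
  refine norm_sq_le_of_adjoint_norm_sq_le hadj hlam (fun u => ?_) e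
  calc ‖C₀E u‖ ^ 2 = ⟪u, ι (C₀E u)⟫ := by rw [← real_inner_self_eq_norm_sq, hadj]
    _ = ⟪C₀ u, u⟫ := by rw [hfactor, real_inner_comm]
    _ ≤ lam * ‖u‖ ^ 2 := hlargest u

theorem Convex.mul_norm_sub_sq_le_inner_sub_of_coercive_fderiv {s : Set E} (hs : Convex ℝ s)
    {f : E → E} {f' : E → E →L[ℝ] E} (hf : ∀ x ∈ s, HasFDerivAt f (f' x) x) {m : ℝ}
    (hcoer : ∀ x ∈ s, ∀ e, m * ‖e‖ ^ 2 ≤ ⟪f' x e, e⟫) {x y : E} (hx : x ∈ s) (hy : y ∈ s) :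
    m * ‖x - y‖ ^ 2 ≤ ⟪x - y, f x - f y⟫ := by
  set φ : ℝ → ℝ := fun t => ⟪x - y, f (y + t • (x - y))⟫
  have hseg : ∀ t ∈ Set.Icc (0 : ℝ) 1, y + t • (x - y) ∈ s := fun t ht =>
    hs.add_smul_sub_mem hy hx ht
  have hφ : ∀ t ∈ Set.Icc (0 : ℝ) 1,
      HasDerivAt φ ⟪x - y, f' (y + t • (x - y)) (x - y)⟫ t := by
    intro t ht
    have hline : HasDerivAt (fun t : ℝ => y + t • (x - y)) (x - y) t := by
      simpa using ((hasDerivAt_id t).smul_const (x - y)).const_add y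
    simpa using (hasDerivAt_const t (x - y)).inner ℝ ((hf _ (hseg t ht)).comp_hasDerivAt t hline)
  have hmvt := (convex_Icc (0 : ℝ) 1).mul_sub_le_image_sub_of_le_deriv
    (fun t ht => (hφ t ht).continuousAt.continuousWithinAt)
    (fun t ht => (hφ t (interior_subset ht)).differentiableAt.differentiableWithinAt)
    (fun t ht => by
      rw [(hφ t (interior_subset ht)).deriv, real_inner_comm]
      exact hcoer _ (hseg t (interior_subset ht)) _)
    0 (by simp) 1 (by simp) zero_le_one
  simpa [φ, inner_sub_right] using hmvt

end InnerProductSpace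

theorem spectral_condition_implies_monotonicity_general
    {H : Type*} [NormedAddCommGroup H] [InnerProductSpace ℝ H]
    [MeasurableSpace H]
    {E : Type*} [NormedAddCommGroup E] [InnerProductSpace ℝ E]
    -- Cameron–Martin space: embedding ι : E = H¹ → H, C₀ = ι ∘ ι*, C₀E = ι*
    (ι : E →L[ℝ] H) (hι : Function.Injective ι)
    (C₀ : H →L[ℝ] H)
    (C₀E : H →L[ℝ] E) (hfactor : ∀ u : H, ι (C₀E u) = C₀ u)
    (hadj : ∀ (u : H) (e : E), ⟪C₀E u, e⟫ = ⟪u, ι e⟫)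
    -- λ₁ is the largest eigenvalue of C₀
    (lam₁ : ℝ) (hlam₁pos : 0 < lam₁)
    (hlargest : ∀ u : H, ⟪C₀ u, u⟫ ≤ lam₁ * ‖u‖ ^ 2)
    -- ξ ∼ N(0, C₀)
    (μG : Measure H)
    (m₀ : H)
    -- Φ with gradient gradΦ and Hessian Φ''; G (x) = E[Φ''(x + m₀ + ξ)]
    (gradΦ : H → H)
    (G : E → H →L[ℝ] H)
    -- U⋆ is a convex open neighborhood of the root x⋆ of J'
    (Ustar : Set E) (hUconv : Convex ℝ Ustar)
    (xstar : E) (hxstar : xstar ∈ Ustar)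
    (hroot : C₀E (∫ c, gradΦ (ι xstar + m₀ + c) ∂μG) + xstar = 0)
    -- J is twice Fréchet differentiable on U⋆, with J''(x) = G(x) + C₀⁻¹ as quadratic
    -- forms on H¹: the derivative DJ of f (x) = C₀ E[Φ'(x + m₀ + ξ)] + x satisfies
    -- ⟪DJ x u, u⟫_{C₀} = ⟪G(x) u, u⟫ + ‖u‖²_{C₀}
    (DJ : E → E →L[ℝ] E)
    (hJdiff : ∀ x ∈ Ustar, HasFDerivAt
      (fun y : E => C₀E (∫ c, gradΦ (ι y + m₀ + c) ∂μG) + y) (DJ x) x)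
    (hquad : ∀ x ∈ Ustar, ∀ u : E, ⟪DJ x u, u⟫ = ⟪G x (ι u), ι u⟫ + ‖u‖ ^ 2)
    -- the spectral lower bound on G
    (θ : ℝ) (hθ : 0 ≤ θ)
    (hspec : ∀ x ∈ Ustar, ∀ u : H, u ≠ 0 → -(θ * lam₁⁻¹) * ‖u‖ ^ 2 ≤ ⟪G x u, u⟫) :
    ∀ x ∈ Ustar, (1 - θ) * ‖x - xstar‖ ^ 2 ≤
      ⟪x - xstar, C₀E (∫ c, gradΦ (ι x + m₀ + c) ∂μG) + x⟫ := by
  intro x hx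
  have hcoer : ∀ y ∈ Ustar, ∀ e : E, (1 - θ) * ‖e‖ ^ 2 ≤ ⟪DJ y e, e⟫ := by
    intro y hy e
    rcases eq_or_ne e 0 with rfl | he
    · simp
    have hG := hspec y hy (ι e) fun h => he (hι (by simpa using h))
    have hιe : lam₁⁻¹ * ‖ι e‖ ^ 2 ≤ ‖e‖ ^ 2 := by
      rw [inv_mul_le_iff₀ hlam₁pos]
      exact norm_sq_le_of_factor_adjoint hfactor hadj hlam₁pos.le hlargest e
    rw [hquad y hy e]
    nlinarith [mul_le_mul_of_nonneg_left hιe hθ]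
  simpa [hroot] using hUconv.mul_norm_sub_sq_le_inner_sub_of_coercive_fderiv hJdiff hcoer hx hxstar

/-- **The spectral convexity condition implies the monotonicity condition in the
Cameron–Martin inner product.**
`H` is a separable real Hilbert space, `C₀` a positive self-adjoint injective trace-class
operator with largest eigenvalue `λ₁ > 0`, and `E` is the Cameron–Martin space
`H¹ = Im (C₀^{1/2})` realized via the embedding `ι : E →L H` with `C₀ = ι ∘ ι*`,
`C₀E = ι*`.  Let `G (x) = E[Φ''(x + m₀ + ξ)]` for `ξ ∼ N(0, C₀)`, let
`J'' (x) = G (x) + C₀⁻¹` as quadratic forms on `H¹` (i.e. the derivative `DJ` of the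
preconditioned map `f (x) = C₀ E[Φ'(x + m₀ + ξ)] + x` satisfies
`⟪DJ x u, u⟫_{C₀} = ⟪G x u, u⟫ + ‖u‖²_{C₀}`), and let `x⋆ ∈ H¹` satisfy `J'(x⋆) = 0`,
with `J` twice Fréchet differentiable on a convex open `U⋆ ∋ x⋆`.  If there is `θ ∈ [0, 1)`
such that `⟪G(x) u, u⟫ ≥ -θ λ₁⁻¹ ‖u‖²` for all `x ∈ U⋆` and nonzero `u ∈ H`, then
`⟪x - x⋆, f (x)⟫_{C₀} ≥ (1 - θ) ‖x - x⋆‖²_{C₀}` for all `x ∈ U⋆`. -/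
theorem spectral_condition_implies_monotonicity
    {H : Type*} [NormedAddCommGroup H] [InnerProductSpace ℝ H] [CompleteSpace H]
    [SecondCountableTopology H] [MeasurableSpace H] [BorelSpace H]
    {E : Type*} [NormedAddCommGroup E] [InnerProductSpace ℝ E] [CompleteSpace E]
    -- Cameron–Martin space: embedding ι : E = H¹ → H, C₀ = ι ∘ ι*, C₀E = ι*
    (ι : E →L[ℝ] H) (hι : Function.Injective ι)
    (C₀ : H →L[ℝ] H) (hCsa : IsSelfAdjoint C₀) (hCpos : ∀ u : H, 0 ≤ ⟪C₀ u, u⟫)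
    (hCinj : Function.Injective C₀)
    (C₀E : H →L[ℝ] E) (hfactor : ∀ u : H, ι (C₀E u) = C₀ u)
    (hadj : ∀ (u : H) (e : E), ⟪C₀E u, e⟫ = ⟪u, ι e⟫)
    -- λ₁ is the largest eigenvalue of C₀
    (lam₁ : ℝ) (hlam₁pos : 0 < lam₁)
    (heig : ∃ v : H, v ≠ 0 ∧ C₀ v = lam₁ • v)
    (hlargest : ∀ u : H, ⟪C₀ u, u⟫ ≤ lam₁ * ‖u‖ ^ 2)
    -- ξ ∼ N(0, C₀)
    (μG : Measure H) [IsProbabilityMeasure μG]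
    (hGauss : ∀ t : H, ∫ u, Complex.exp (Complex.I * (⟪t, u⟫ : ℝ)) ∂μG =
      Complex.exp (-(1 / 2 : ℂ) * (⟪C₀ t, t⟫ : ℝ)))
    (m₀ : H)
    -- Φ with gradient gradΦ and Hessian Φ''; G (x) = E[Φ''(x + m₀ + ξ)]
    (Φ : H → ℝ) (gradΦ : H → H)
    (hΦ' : ∀ u : H, HasGradientAt Φ (gradΦ u) u)
    (Φ'' : H → H →L[ℝ] H) (hΦ'' : ∀ u : H, HasFDerivAt gradΦ (Φ'' u) u)
    (hgradint : ∀ x : E, Integrable (fun c => gradΦ (ι x + m₀ + c)) μG)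
    (hGint : ∀ x : E, Integrable (fun c => Φ'' (ι x + m₀ + c)) μG)
    (G : E → H →L[ℝ] H) (hG : ∀ x : E, G x = ∫ c, Φ'' (ι x + m₀ + c) ∂μG)
    -- U⋆ is a convex open neighborhood of the root x⋆ of J'
    (Ustar : Set E) (hUopen : IsOpen Ustar) (hUconv : Convex ℝ Ustar)
    (xstar : E) (hxstar : xstar ∈ Ustar)
    (hroot : C₀E (∫ c, gradΦ (ι xstar + m₀ + c) ∂μG) + xstar = 0)
    -- J is twice Fréchet differentiable on U⋆, with J''(x) = G(x) + C₀⁻¹ as quadratic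
    -- forms on H¹: the derivative DJ of f (x) = C₀ E[Φ'(x + m₀ + ξ)] + x satisfies
    -- ⟪DJ x u, u⟫_{C₀} = ⟪G(x) u, u⟫ + ‖u‖²_{C₀}
    (DJ : E → E →L[ℝ] E)
    (hJdiff : ∀ x ∈ Ustar, HasFDerivAt
      (fun y : E => C₀E (∫ c, gradΦ (ι y + m₀ + c) ∂μG) + y) (DJ x) x)
    (hquad : ∀ x ∈ Ustar, ∀ u : E, ⟪DJ x u, u⟫ = ⟪G x (ι u), ι u⟫ + ‖u‖ ^ 2)
    -- the spectral lower bound on G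
    (θ : ℝ) (hθ : 0 ≤ θ) (hθ1 : θ < 1)
    (hspec : ∀ x ∈ Ustar, ∀ u : H, u ≠ 0 → -(θ * lam₁⁻¹) * ‖u‖ ^ 2 ≤ ⟪G x u, u⟫) :
    ∀ x ∈ Ustar, (1 - θ) * ‖x - xstar‖ ^ 2 ≤
      ⟪x - xstar, C₀E (∫ c, gradΦ (ι x + m₀ + c) ∂μG) + x⟫ :=
  spectral_condition_implies_monotonicity_general ι hι C₀ C₀E hfactor hadj lam₁ hlam₁pos hlargest μG
    m₀ gradΦ G Ustar hUconv xstar hxstar hroot DJ hJdiff hquad θ hθ hspec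
end
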